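/- arXiv:2412.17269 — 2 statements merged into one kernel-verified Lean document; each statement's English description precedes it below -/
import Mathlib

section
/- Let r₁,…,r_n be i.i.d. standard Gaussian random variables, and let J, J' ⊆ {1,…,n} be sets with |J Δ J'| ≥ m (symmetric difference). Let Σ = Σ_{i∈J} r_i and Σ' = Σ_{i∈J'} r_i. Then for any real a > 0 and phases φ, φ', |E[e^(2πi(φ+Σ)/a) · conj(e^(2πi(φ'+Σ')/a))]| ≤ e^(-2π²m/a²). -/
open MeasureTheory ProbabilityTheory Real

lemma gauss_char (t : ℝ) :
    ∫ x : ℝ, Complex.exp (t * x * Complex.I) ∂(gaussianReal 0 1)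
      = ((Real.exp (-(t^2)/2) : ℝ) : ℂ) := by
  rw [Complex.ofReal_exp, show (((-(t^2)/2 : ℝ)) : ℂ) = -((t:ℂ)^2)/2 by push_cast; ring]
  have hmeas : Measurable fun x => (gaussianPDFReal 0 1 x).toNNReal :=
    (measurable_gaussianPDFReal 0 1).real_toNNReal
  have hwd : gaussianReal 0 1
      = volume.withDensity fun x => ((gaussianPDFReal 0 1 x).toNNReal : ENNReal) := by
    rw [gaussianReal_of_var_ne_zero 0 one_ne_zero]; rfl
  rw [hwd, integral_withDensity_eq_integral_smul hmeas]
  have hpdf : ∀ x : ℝ, ((gaussianPDFReal 0 1 x).toNNReal : ℝ)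
      = (Real.sqrt (2 * π))⁻¹ * Real.exp (-(x^2)/2) := by
    intro x
    rw [Real.coe_toNNReal _ (gaussianPDFReal_nonneg 0 1 x)]
    simp [gaussianPDFReal]
  have key : ∀ x : ℝ, (gaussianPDFReal 0 1 x).toNNReal • Complex.exp (t * x * Complex.I)
      = ((Real.sqrt (2 * π))⁻¹ : ℂ) * Complex.exp ((-(1:ℂ)/2) * x^2 + (t * Complex.I) * x + 0) := by
    intro x
    rw [NNReal.smul_def, Complex.real_smul, hpdf x]
    push_cast
    rw [mul_assoc]
    congr 1
    rw [← Complex.exp_add]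
    congr 1
    ring
  simp_rw [key]
  rw [integral_const_mul, integral_cexp_quadratic (by norm_num) (t * Complex.I) 0]
  have h2 : ((π : ℂ) / -(-(1:ℂ)/2)) = ((2 * π : ℝ) : ℂ) := by push_cast; ring
  rw [h2, show ((1:ℂ)/2) = ((1/2 : ℝ) : ℂ) by norm_num,
    ← Complex.ofReal_cpow (by positivity), ← Real.sqrt_eq_rpow]
  have hs : ((Real.sqrt (2 * π)) : ℂ) ≠ 0 :=
    Complex.ofReal_ne_zero.mpr (Real.sqrt_ne_zero'.mpr (by positivity))
  rw [← mul_assoc, inv_mul_cancel₀ hs, one_mul]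
  congr 1
  rw [mul_pow, Complex.I_sq]
  ring


/-- For iid standard Gaussians `r₁,…,rₙ` (modeled by the product Gaussian measure on
`Fin n → ℝ`), sets `J, J'` with `|J Δ J'| ≥ m`, sums `Σ = ∑_{i∈J} rᵢ`, `Σ' = ∑_{i∈J'} rᵢ`,
any `a > 0` and phases `φ, φ'`:
`|E[e^{2πi(φ+Σ)/a} ⬝ conj(e^{2πi(φ'+Σ')/a})]| ≤ e^{-2π²m/a²}`. -/
theorem stmt_3 (n m : ℕ) (J J' : Finset (Fin n)) (hm : m ≤ (symmDiff J J').card)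
    (a : ℝ) (ha : 0 < a) (φ φ' : ℝ) :
    ‖∫ ω : Fin n → ℝ,
        Complex.exp (2 * π * Complex.I * (φ + ∑ i ∈ J, ω i) / a) *
          (starRingEnd ℂ) (Complex.exp (2 * π * Complex.I * (φ' + ∑ i ∈ J', ω i) / a))
        ∂(Measure.pi fun _ : Fin n => gaussianReal 0 1)‖
      ≤ Real.exp (-2 * π ^ 2 * m / a ^ 2) := by
  classical
  set c : Fin n → ℝ := fun i => (if i ∈ J then (1:ℝ) else 0) - (if i ∈ J' then (1:ℝ) else 0) with hc
  have hre : ∀ (ψ : ℝ) (s : Finset (Fin n)) (ω : Fin n → ℝ),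
      2 * (π:ℂ) * Complex.I * ((ψ:ℂ) + ((∑ i ∈ s, ω i : ℝ) : ℂ)) / a
        = ((2 * π * (ψ + ∑ i ∈ s, ω i) / a : ℝ) : ℂ) * Complex.I := by
    intros; push_cast; ring
  have hreal : ∀ ω : Fin n → ℝ,
      (2*π*(φ + ∑ i ∈ J, ω i)/a) - (2*π*(φ' + ∑ i ∈ J', ω i)/a)
        = 2*π*(φ-φ')/a + ∑ i, (2*π*c i/a) * ω i := by
    intro ω
    have hs : ∀ s : Finset (Fin n), ∑ i ∈ s, ω i
        = ∑ i : Fin n, (if i ∈ s then ω i else 0) := fun s => by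
      rw [Finset.sum_ite_mem, Finset.univ_inter]
    have h1 : ∑ i, (2*π*c i/a) * ω i
        = 2*π*((∑ i ∈ J, ω i) - ∑ i ∈ J', ω i)/a := by
      rw [hs J, hs J', ← Finset.sum_sub_distrib, Finset.mul_sum, Finset.sum_div]
      refine Finset.sum_congr rfl fun i _ => ?_
      by_cases hJ : i ∈ J <;> by_cases hJ' : i ∈ J' <;> simp [hc, hJ, hJ'] <;> ring
    rw [h1]; ring
  have hpt : ∀ ω : Fin n → ℝ,
      Complex.exp (2 * π * Complex.I * (φ + ∑ i ∈ J, ω i) / a) *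
          (starRingEnd ℂ) (Complex.exp (2 * π * Complex.I * (φ' + ∑ i ∈ J', ω i) / a))
        = Complex.exp (((2*π*(φ-φ')/a : ℝ) : ℂ) * Complex.I) *
            ∏ i, Complex.exp (((2*π*c i/a : ℝ) : ℂ) * (ω i : ℂ) * Complex.I) := by
    intro ω
    rw [hre φ J ω, hre φ' J' ω, ← Complex.exp_conj, map_mul, Complex.conj_ofReal,
      Complex.conj_I, ← Complex.exp_sum, ← Complex.exp_add, ← Complex.exp_add]
    congr 1
    have h' := congrArg (Complex.ofReal) (hreal ω)
    push_cast at h' ⊢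
    rw [← Finset.sum_mul]
    linear_combination Complex.I * h'
  letI : MeasureSpace ℝ := ⟨gaussianReal 0 1⟩
  haveI : SigmaFinite (volume : Measure ℝ) :=
    inferInstanceAs (SigmaFinite (gaussianReal 0 1))
  rw [show (Measure.pi fun _ : Fin n => gaussianReal 0 1) = (volume : Measure (Fin n → ℝ)) from rfl]
  simp_rw [hpt]
  rw [integral_const_mul,
    MeasureTheory.integral_fintype_prod_volume_eq_prod (ι := Fin n)
      (f := fun i (x : ℝ) => Complex.exp (((2*π*c i/a : ℝ) : ℂ) * (x:ℂ) * Complex.I))]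
  have hint : ∀ i : Fin n, (∫ x : ℝ, Complex.exp (((2*π*c i/a : ℝ) : ℂ) * (x:ℂ) * Complex.I))
      = ((Real.exp (-((2*π*c i/a)^2)/2) : ℝ) : ℂ) := fun i => gauss_char (2*π*c i/a)
  simp_rw [hint]
  rw [norm_mul, norm_prod]
  have h1 : ‖Complex.exp (((2*π*(φ-φ')/a : ℝ) : ℂ) * Complex.I)‖ = 1 := by
    simp [Complex.norm_exp]
  rw [h1, one_mul]
  have h2 : ∀ i : Fin n, ‖(((Real.exp (-((2*π*c i/a)^2)/2) : ℝ)) : ℂ)‖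
      = Real.exp (-((2*π*c i/a)^2)/2) := by
    intro i
    rw [Complex.norm_real, Real.norm_eq_abs, abs_of_nonneg (Real.exp_nonneg _)]
  simp_rw [h2]
  rw [← Real.exp_sum]
  apply Real.exp_le_exp.mpr
  have hc2 : ∀ i : Fin n, (c i)^2 = if i ∈ symmDiff J J' then (1:ℝ) else 0 := by
    intro i
    by_cases hJ : i ∈ J <;> by_cases hJ' : i ∈ J' <;>
      simp [hc, hJ, hJ', Finset.mem_symmDiff]
  have hsum : ∑ i : Fin n, -((2*π*c i/a)^2)/2
      = -(2*π^2/a^2) * (symmDiff J J').card := by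
    have : ∀ i : Fin n, -((2*π*c i/a)^2)/2 = -(2*π^2/a^2) * (c i)^2 := by
      intro i; field_simp
    simp_rw [this, hc2]
    rw [← Finset.mul_sum]
    congr 1
    rw [Finset.sum_ite_mem, Finset.univ_inter, Finset.sum_const, nsmul_eq_mul, mul_one]
  rw [hsum]
  have hle : -(2*π^2/a^2) * ((symmDiff J J').card : ℝ) ≤ -(2*π^2/a^2) * (m : ℝ) := by
    apply mul_le_mul_of_nonpos_left (Nat.cast_le.mpr hm)
    have : (0:ℝ) < 2*π^2/a^2 := by positivity
    linarith
  calc -(2*π^2/a^2) * ((symmDiff J J').card : ℝ) ≤ -(2*π^2/a^2) * (m : ℝ) := hle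
    _ = -2 * π ^ 2 * m / a ^ 2 := by ring
end

section
/- Let a > 0 be real and ω_a = e^(2πi/a). Let r₁,…,r_n be i.i.d. N(0,1) random variables, and let J₁,…,J_K ⊆ {1,…,n} be sets such that all but at most a fraction ζ of unordered pairs {k,k'} with k ≠ k' satisfy |J_k Δ J_{k'}| ≥ a²t. Let Σ_k = Σ_{i∈J_k} r_i and let φ_k ∈ [0,2π). Then E[|Σ_{k=1}^K ω_a^(φ_k + Σ_k)|²] ≤ K + 2ζ·C(K,2) + 2·C(K,2)·e^(-2π²t). -/
open MeasureTheory ProbabilityTheory Real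
open scoped ENNReal NNReal

lemma aux_pi_integral {m : ℕ} (μ : Measure ℝ) [SigmaFinite μ] (f : Fin m → ℝ → ℂ) :
    ∫ x : Fin m → ℝ, ∏ i, f i (x i) ∂(Measure.pi fun _ => μ) = ∏ i, ∫ x, f i x ∂μ := by
  induction m with
  | zero => simp [Measure.pi_of_empty (fun _ : Fin 0 => μ)]
  | succ m ih =>
    have h := measurePreserving_piFinSuccAbove (fun _ : Fin (m+1) => μ) 0
    calc ∫ x : Fin (m+1) → ℝ, ∏ i, f i (x i) ∂(Measure.pi fun _ => μ)
        = ∫ y : ℝ × (Fin m → ℝ), f 0 y.1 * ∏ j : Fin m, f j.succ (y.2 j)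
            ∂((μ : Measure ℝ).prod (Measure.pi fun _ => μ)) := by
          rw [← h.integral_comp (MeasurableEquiv.measurableEmbedding _)]
          congr 1; funext x
          simp [MeasurableEquiv.piFinSuccAbove, Fin.prod_univ_succ, Fin.zero_succAbove, Fin.tail]
      _ = (∫ x, f 0 x ∂μ) * ∏ j : Fin m, ∫ x, f j.succ x ∂μ := by
          rw [integral_prod_mul (f := f 0) (g := fun z : Fin m → ℝ => ∏ j, f j.succ (z j)), ih]
      _ = ∏ i, ∫ x, f i x ∂μ := (Fin.prod_univ_succ (fun i => ∫ x, f i x ∂μ)).symm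

lemma aux_card (K : ℕ) :
    ((Finset.univ : Finset (Fin K × Fin K)).filter fun p => p.1 < p.2).card = K.choose 2 := by
  rw [Finset.card_filter, Fintype.sum_prod_type_right]
  have h1 : ∀ l : Fin K, (∑ k : Fin K, if k < l then 1 else 0) = (l:ℕ) := by
    intro l
    rw [← Finset.card_filter]
    have : (Finset.univ.filter fun k => k < l) = Finset.Iio l := by ext; simp
    rw [this]; simp
  simp_rw [h1]
  rw [Fin.sum_univ_eq_sum_range (fun i => i) K, Nat.choose_two_right, Finset.sum_range_id]

lemma aux_gauss (s : ℝ) : ∫ x : ℝ, Complex.exp (↑(s * x) * Complex.I) ∂(gaussianReal 0 1)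
    = ↑(Real.exp (-s^2/2)) := by
  have hdens : gaussianReal 0 1 =
      (volume : Measure ℝ).withDensity fun x => ((gaussianPDFReal 0 1 x).toNNReal : ℝ≥0∞) := by
    rw [gaussianReal_of_var_ne_zero _ one_ne_zero]; rfl
  rw [hdens, integral_withDensity_eq_integral_smul
    (by exact (measurable_gaussianPDFReal 0 1).real_toNNReal) _]
  have hpt : ∀ x : ℝ, ((gaussianPDFReal 0 1 x).toNNReal : ℝ≥0) • Complex.exp (↑(s * x) * Complex.I)
      = (↑((Real.sqrt (2 * π))⁻¹) : ℂ)
        * Complex.exp ((-1/2 : ℂ) * x ^ 2 + (↑s * Complex.I) * x + 0) := by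
    intro x
    rw [NNReal.smul_def, Real.coe_toNNReal _ (gaussianPDFReal_nonneg 0 1 x), gaussianPDFReal,
      Complex.real_smul]
    push_cast
    rw [mul_one, mul_assoc, ← Complex.exp_add]
    congr 1
    ring
  simp_rw [hpt]
  rw [integral_const_mul, integral_cexp_quadratic (by norm_num : (-1/2 : ℂ).re < 0)]
  have h1 : ((π : ℂ) / -(-1/2)) = ((2 * π : ℝ) : ℂ) := by push_cast; ring
  have h2 : ((2 * π : ℝ) : ℂ) ^ (1/2 : ℂ) = ((Real.sqrt (2 * π) : ℝ) : ℂ) := by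
    rw [Real.sqrt_eq_rpow, Complex.ofReal_cpow (by positivity)]
    norm_num
  have h3 : (0 - (↑s * Complex.I) ^ 2 / (4 * (-1/2 : ℂ))) = ((-s^2/2 : ℝ) : ℂ) := by
    push_cast
    ring_nf
    rw [Complex.I_sq]
    ring
  rw [h1, h2, h3, ← Complex.ofReal_exp]
  rw [← mul_assoc, ← Complex.ofReal_mul]
  rw [inv_mul_cancel₀ (by positivity : Real.sqrt (2*π) ≠ 0)]
  simp

lemma aux_pair {n : ℕ} (a : ℝ) (ha : 0 < a) (S T : Finset (Fin n)) (u v : ℝ) :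
    ∫ ω : Fin n → ℝ, (Complex.exp (↑(2*π*(u + ∑ i ∈ S, ω i)/a) * Complex.I) *
        (starRingEnd ℂ) (Complex.exp (↑(2*π*(v + ∑ i ∈ T, ω i)/a) * Complex.I)))
      ∂(Measure.pi fun _ : Fin n => gaussianReal 0 1)
    = Complex.exp (↑(2*π*(u - v)/a) * Complex.I) *
      ↑(Real.exp (-(2*π^2) * ((symmDiff S T).card : ℝ) / a^2)) := by
  set c : Fin n → ℝ := fun i => (if i ∈ S then 2*π/a else 0) - (if i ∈ T then 2*π/a else 0)
    with hc
  have hpt : ∀ ω : Fin n → ℝ,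
      Complex.exp (↑(2*π*(u + ∑ i ∈ S, ω i)/a) * Complex.I) *
        (starRingEnd ℂ) (Complex.exp (↑(2*π*(v + ∑ i ∈ T, ω i)/a) * Complex.I))
      = Complex.exp (↑(2*π*(u - v)/a) * Complex.I)
        * ∏ i, Complex.exp (↑(c i * ω i) * Complex.I) := by
    intro ω
    rw [← Complex.exp_conj, map_mul, Complex.conj_ofReal, Complex.conj_I, ← Complex.exp_sum,
      ← Complex.exp_add, ← Complex.exp_add]
    congr 1
    have hsum : ∑ i, ((c i * ω i : ℝ) : ℂ) * Complex.I
        = ((∑ i, c i * ω i : ℝ) : ℂ) * Complex.I := by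
      push_cast; rw [Finset.sum_mul]
    have key : (2*π*(u + ∑ i ∈ S, ω i)/a) - (2*π*(v + ∑ i ∈ T, ω i)/a)
        = 2*π*(u-v)/a + ∑ i, c i * ω i := by
      have hexp : ∑ i, c i * ω i
          = (2*π/a) * (∑ i ∈ S, ω i) - (2*π/a) * (∑ i ∈ T, ω i) := by
        simp only [hc, sub_mul, ite_mul, zero_mul, Finset.sum_sub_distrib,
          Finset.sum_ite_mem, Finset.univ_inter, Finset.mul_sum]
      rw [hexp]
      field_simp
      ring
    calc ((2*π*(u + ∑ i ∈ S, ω i)/a : ℝ) : ℂ) * Complex.I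
          + ((2*π*(v + ∑ i ∈ T, ω i)/a : ℝ) : ℂ) * (-Complex.I)
        = (((2*π*(u + ∑ i ∈ S, ω i)/a) - (2*π*(v + ∑ i ∈ T, ω i)/a) : ℝ) : ℂ) * Complex.I := by
          push_cast; ring
      _ = ((2*π*(u-v)/a + ∑ i, c i * ω i : ℝ) : ℂ) * Complex.I := by rw [key]
      _ = ((2*π*(u-v)/a : ℝ) : ℂ) * Complex.I + ∑ i, ((c i * ω i : ℝ) : ℂ) * Complex.I := by
          rw [hsum]; push_cast; ring
  simp_rw [hpt]
  rw [integral_const_mul,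
    aux_pi_integral (gaussianReal 0 1) (fun i x => Complex.exp (↑(c i * x) * Complex.I))]
  congr 1
  simp_rw [aux_gauss]
  rw [← Complex.ofReal_prod, ← Real.exp_sum]
  have hterm : ∀ i : Fin n, -(c i)^2/2
      = if i ∈ symmDiff S T then -(2*π^2)/a^2 else 0 := by
    intro i
    by_cases hS : i ∈ S <;> by_cases hT : i ∈ T
    · rw [if_neg (by simp [Finset.mem_symmDiff, hS, hT])]
      simp only [hc, hS, hT, if_true]
      ring
    · rw [if_pos (by simp [Finset.mem_symmDiff, hS, hT])]
      simp only [hc, hS, hT, if_true, if_false]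
      field_simp
      ring
    · rw [if_pos (by simp [Finset.mem_symmDiff, hS, hT])]
      simp only [hc, hS, hT, if_true, if_false]
      field_simp
      ring
    · rw [if_neg (by simp [Finset.mem_symmDiff, hS, hT])]
      simp only [hc, hS, hT, if_false]
      ring
  have hsum2 : ∑ i : Fin n, (-(c i)^2/2)
      = -(2*π^2) * ((symmDiff S T).card : ℝ) / a^2 := by
    simp_rw [hterm]
    rw [Finset.sum_ite_mem, Finset.univ_inter, Finset.sum_const, nsmul_eq_mul]
    ring
  rw [hsum2]

/-- Lemma 1 (essentially Lemma 2 of Cai): for iid standard Gaussians and sets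
`J₁,…,J_K` such that all but at most a fraction `ζ` of unordered pairs `{k,k'}`, `k ≠ k'`,
satisfy `|J_k Δ J_{k'}| ≥ a² t`, with `Σ_k = ∑_{i∈J_k} rᵢ` and phases `φ_k ∈ [0,2π)`:
`E[|∑_k ω_a^{φ_k + Σ_k}|²] ≤ K + 2ζ C(K,2) + 2 C(K,2) e^{-2π²t}`. -/
theorem stmt_4 (n K : ℕ) (a t ζ : ℝ) (ha : 0 < a) (hζ : 0 ≤ ζ)
    (J : Fin K → Finset (Fin n)) (φ : Fin K → ℝ)
    (hφ : ∀ k, 0 ≤ φ k ∧ φ k < 2 * π)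
    (hpairs : (((Finset.univ : Finset (Fin K × Fin K)).filter fun p =>
        p.1 < p.2 ∧ ((symmDiff (J p.1) (J p.2)).card : ℝ) < a ^ 2 * t).card : ℝ)
        ≤ ζ * (K.choose 2)) :
    (∫ ω : Fin n → ℝ,
        ‖∑ k : Fin K, Complex.exp (2 * π * Complex.I * (φ k + ∑ i ∈ J k, ω i) / a)‖ ^ 2
        ∂(Measure.pi fun _ : Fin n => gaussianReal 0 1))
      ≤ K + 2 * ζ * (K.choose 2) + 2 * (K.choose 2) * Real.exp (-2 * π ^ 2 * t) := by
  set μn := Measure.pi fun _ : Fin n => gaussianReal 0 1 with hμn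
  set g : Fin K × Fin K → (Fin n → ℝ) → ℂ := fun p ω =>
    Complex.exp (↑(2*π*(φ p.1 + ∑ i ∈ J p.1, ω i)/a) * Complex.I) *
      (starRingEnd ℂ) (Complex.exp (↑(2*π*(φ p.2 + ∑ i ∈ J p.2, ω i)/a) * Complex.I)) with hg
  set E : Fin K × Fin K → ℝ := fun p =>
    Real.exp (-(2*π^2) * ((symmDiff (J p.1) (J p.2)).card : ℝ) / a^2) with hE
  set F : Fin K × Fin K → ℝ := fun p =>
    (Complex.exp (↑(2*π*(φ p.1 - φ p.2)/a) * Complex.I)).re * E p with hF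
  -- rewrite the integrand
  have hrw : ∀ ω : Fin n → ℝ,
      ‖∑ k : Fin K, Complex.exp (2 * π * Complex.I * (φ k + ∑ i ∈ J k, ω i) / a)‖ ^ 2
      = ∑ p : Fin K × Fin K, (g p ω).re := by
    intro ω
    have h1 : (∑ k : Fin K, Complex.exp (2 * π * Complex.I * (φ k + ∑ i ∈ J k, ω i) / a))
        = ∑ k : Fin K, Complex.exp (↑(2*π*(φ k + ∑ i ∈ J k, ω i)/a) * Complex.I) := by
      refine Finset.sum_congr rfl fun k _ => ?_
      congr 1
      push_cast
      ring
    rw [h1]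
    set z := ∑ k : Fin K, Complex.exp (↑(2*π*(φ k + ∑ i ∈ J k, ω i)/a) * Complex.I) with hz
    have h2 : ‖z‖ ^ 2 = (z * (starRingEnd ℂ) z).re := by
      rw [Complex.mul_conj, Complex.sq_norm, Complex.ofReal_re]
    rw [h2, hz, map_sum, Finset.sum_mul_sum, ← Complex.re_sum, Fintype.sum_prod_type]
  simp_rw [hrw]
  -- measurability and integrability
  have hmeas : ∀ p, AEStronglyMeasurable (g p) μn := by
    intro p
    apply Measurable.aestronglyMeasurable
    have hb : ∀ k : Fin K, Measurable fun ω : Fin n → ℝ =>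
        Complex.exp (↑(2*π*(φ k + ∑ i ∈ J k, ω i)/a) * Complex.I) := by
      intro k
      have : Measurable fun ω : Fin n → ℝ => ∑ i ∈ J k, ω i :=
        Finset.measurable_sum _ fun i _ => measurable_pi_apply i
      fun_prop
    exact (hb p.1).mul (Complex.conjCLE.continuous.measurable.comp (hb p.2))
  have hnorm : ∀ p ω, ‖g p ω‖ = 1 := by
    intro p ω
    rw [hg]
    simp only [norm_mul, RCLike.norm_conj]
    rw [Complex.norm_exp_ofReal_mul_I,
      Complex.norm_exp_ofReal_mul_I, mul_one]
  have hint : ∀ p, Integrable (g p) μn := by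
    intro p
    refine Integrable.mono' (integrable_const 1) (hmeas p) ?_
    filter_upwards with ω using le_of_eq (hnorm p ω)
  -- exchange integral and sum
  have hswap : (∫ ω : Fin n → ℝ, ∑ p : Fin K × Fin K, (g p ω).re ∂μn)
      = ∑ p : Fin K × Fin K, (∫ ω, g p ω ∂μn).re := by
    simp_rw [← RCLike.re_to_complex]
    rw [integral_finset_sum _ fun p _ => (hint p).re]
    exact Finset.sum_congr rfl fun p _ => integral_re (hint p)
  rw [hswap]
  -- compute each integral
  have hval : ∀ p : Fin K × Fin K, (∫ ω, g p ω ∂μn).re = F p := by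
    intro p
    rw [hg, hμn]
    rw [aux_pair a ha (J p.1) (J p.2) (φ p.1) (φ p.2)]
    rw [Complex.mul_re, Complex.ofReal_re, Complex.ofReal_im, mul_zero, sub_zero]
  rw [Finset.sum_congr rfl fun p _ => hval p]
  -- basic estimates
  have hπ := Real.pi_pos
  have ha2 : (0:ℝ) < a^2 := by positivity
  have hFE : ∀ p, F p ≤ E p := by
    intro p
    have h1 : (Complex.exp (↑(2*π*(φ p.1 - φ p.2)/a) * Complex.I)).re ≤ 1 := by
      refine le_trans (Complex.re_le_norm _) ?_
      rw [Complex.norm_exp_ofReal_mul_I]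
    calc F p ≤ 1 * E p := mul_le_mul_of_nonneg_right h1 (Real.exp_pos _).le
      _ = E p := one_mul _
  have hEone : ∀ p, E p ≤ 1 := by
    intro p
    rw [hE]
    apply Real.exp_le_one_iff.mpr
    have hcard : (0:ℝ) ≤ ((symmDiff (J p.1) (J p.2)).card : ℝ) := Nat.cast_nonneg _
    apply div_nonpos_of_nonpos_of_nonneg _ ha2.le
    nlinarith
  have hEgood : ∀ p : Fin K × Fin K, ¬ (((symmDiff (J p.1) (J p.2)).card : ℝ) < a ^ 2 * t) →
      E p ≤ Real.exp (-2 * π ^ 2 * t) := by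
    intro p hp
    push_neg at hp
    rw [hE]
    apply Real.exp_le_exp.mpr
    rw [div_le_iff₀ ha2]
    nlinarith [mul_le_mul_of_nonneg_left hp (by positivity : (0:ℝ) ≤ 2*π^2)]
  -- diagonal
  have hdiag : ∑ k : Fin K, F (k, k) = (K : ℝ) := by
    have hone : ∀ k : Fin K, F (k, k) = 1 := by
      intro k
      rw [hF, hE]
      simp [symmDiff_self]
    simp [hone]
  -- split the sum
  set Lo := (Finset.univ : Finset (Fin K × Fin K)).filter (fun p => p.1 < p.2) with hLo
  set Hi := (Finset.univ : Finset (Fin K × Fin K)).filter (fun p => p.2 < p.1) with hHi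
  have hsplit : ∑ p : Fin K × Fin K, F p
      = (∑ k : Fin K, F (k, k)) + (∑ p ∈ Lo, F p + ∑ p ∈ Hi, F p) := by
    rw [← Finset.sum_filter_add_sum_filter_not Finset.univ (fun p : Fin K × Fin K => p.1 = p.2) F]
    congr 1
    · rw [Finset.sum_filter, Fintype.sum_prod_type]
      refine Finset.sum_congr rfl fun k _ => ?_
      simp
    · rw [← Finset.sum_union]
      · congr 1
        ext p
        simp only [Finset.mem_filter, Finset.mem_union, Finset.mem_univ, true_and, hLo, hHi]
        constructor
        · intro h
          exact lt_or_gt_of_ne h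
        · rintro (h | h)
          · exact ne_of_lt h
          · exact ne_of_gt h
      · rw [Finset.disjoint_left]
        intro p hp hq
        simp only [hLo, hHi, Finset.mem_filter] at hp hq
        exact absurd hq.2 (asymm hp.2)
  rw [hsplit, hdiag]
  -- bound the off-diagonal sums
  have hLoE : ∑ p ∈ Lo, E p ≤ ζ * (K.choose 2) + (K.choose 2) * Real.exp (-2 * π ^ 2 * t) := by
    rw [← Finset.sum_filter_add_sum_filter_not Lo
      (fun p => ((symmDiff (J p.1) (J p.2)).card : ℝ) < a ^ 2 * t) E]
    have hbad : ∑ p ∈ Lo.filter (fun p => ((symmDiff (J p.1) (J p.2)).card : ℝ) < a ^ 2 * t), E p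
        ≤ ζ * (K.choose 2) := by
      refine le_trans (Finset.sum_le_card_nsmul _ _ 1 fun p _ => hEone p) ?_
      rw [nsmul_eq_mul, mul_one]
      rw [hLo, Finset.filter_filter]
      exact hpairs
    have hgood : ∑ p ∈ Lo.filter (fun p => ¬ ((symmDiff (J p.1) (J p.2)).card : ℝ) < a ^ 2 * t),
        E p ≤ (K.choose 2) * Real.exp (-2 * π ^ 2 * t) := by
      refine le_trans (Finset.sum_le_card_nsmul _ _ (Real.exp (-2 * π ^ 2 * t))
        fun p hp => hEgood p (Finset.mem_filter.mp hp).2) ?_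
      rw [nsmul_eq_mul]
      have hcard : ((Lo.filter (fun p =>
          ¬ ((symmDiff (J p.1) (J p.2)).card : ℝ) < a ^ 2 * t)).card : ℝ)
          ≤ ((K.choose 2 : ℕ) : ℝ) := by
        have := Finset.card_filter_le Lo
          (fun p => ¬ ((symmDiff (J p.1) (J p.2)).card : ℝ) < a ^ 2 * t)
        rw [hLo] at this
        rw [aux_card K] at this
        exact_mod_cast this
      exact mul_le_mul_of_nonneg_right hcard (Real.exp_pos _).le
    linarith
  have hLoF : ∑ p ∈ Lo, F p ≤ ∑ p ∈ Lo, E p := Finset.sum_le_sum fun p _ => hFE p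
  have hHiF : ∑ p ∈ Hi, F p ≤ ∑ p ∈ Lo, E p := by
    refine le_trans (Finset.sum_le_sum fun p (_ : p ∈ Hi) => hFE p) (le_of_eq ?_)
    refine Finset.sum_nbij' (i := Prod.swap) (j := Prod.swap) ?_ ?_ ?_ ?_ ?_
    · intro p hp
      simp only [hLo, hHi, Finset.mem_filter, Finset.mem_univ, true_and] at hp ⊢
      exact hp
    · intro p hp
      simp only [hLo, hHi, Finset.mem_filter, Finset.mem_univ, true_and] at hp ⊢
      exact hp
    · intro p _; rfl
    · intro p _; rfl
    · intro p _
      rw [hE]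
      simp only [Prod.fst_swap, Prod.snd_swap]
      rw [symmDiff_comm]
  calc (K : ℝ) + (∑ p ∈ Lo, F p + ∑ p ∈ Hi, F p)
      ≤ (K : ℝ) + ((ζ * (K.choose 2) + (K.choose 2) * Real.exp (-2 * π ^ 2 * t))
        + (ζ * (K.choose 2) + (K.choose 2) * Real.exp (-2 * π ^ 2 * t))) := by
        have := le_trans hLoF hLoE
        have := le_trans hHiF hLoE
        linarith
    _ = (K : ℝ) + 2 * ζ * (K.choose 2) + 2 * (K.choose 2) * Real.exp (-2 * π ^ 2 * t) := by ring
end
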